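/- Let m, n, r be positive integers and let η, G, Γ_u, Γ_v ≥ 0 be reals. Let U be a real m×r matrix with ‖U‖_F ≤ Γ_u and V a real n×r matrix with ‖V‖_F ≤ Γ_v. Let P be a real m×r matrix with ‖P‖_F ≤ G·Γ_v and Q a real n×r matrix with ‖Q‖_F ≤ G·Γ_u. Then ‖(U − η·P)·(V − η·Q)ᵀ − U·Vᵀ‖_F² ≤ 3·η²·G²·(Γ_u⁴ + Γ_v⁴ + η²·G²·Γ_u²·Γ_v²). -/

import Mathlib

open Matrix BigOperators

/-- Squared Frobenius norm of a real matrix. -/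
noncomputable def frobSq {m n : ℕ} (A : Matrix (Fin m) (Fin n) ℝ) : ℝ :=
  ∑ i, ∑ j, (A i j) ^ 2

/-- Frobenius norm of a real matrix. -/
noncomputable def frobNorm {m n : ℕ} (A : Matrix (Fin m) (Fin n) ℝ) : ℝ :=
  Real.sqrt (frobSq A)

/-!
Expanding the product, `(U - ηP)(V - ηQ)ᵀ - UVᵀ = η²PQᵀ - η(UQᵀ + PVᵀ)`. Submultiplicativity
of the Frobenius norm bounds the three terms by `|η|GΓu²`, `|η|GΓv²` and `η²G²ΓuΓv`, and
`(a + b + c)² ≤ 3(a² + b² + c²)` turns the bound on the norm into the claimed one on its square.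
-/

attribute [local instance] Matrix.frobeniusSeminormedAddCommGroup Matrix.frobeniusNormSMulClass

namespace Matrix

lemma sub_smul_mul_sub_smul_sub_mul {R : Type*} [CommRing R] {l m n : Type*} [Fintype m]
    (U P : Matrix l m R) (W Q : Matrix m n R) (η : R) :
    (U - η • P) * (W - η • Q) - U * W = η ^ 2 • (P * Q) - η • (U * Q + P * W) := by
  simp only [Matrix.sub_mul, Matrix.mul_sub, Matrix.smul_mul, Matrix.mul_smul]
  module

lemma frobenius_norm_sub_smul_mul_sub_smul_sub_mul_le {𝕜 : Type*} [RCLike 𝕜]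
    {l m n : Type*} [Fintype l] [Fintype m] [Fintype n]
    (U P : Matrix l m 𝕜) (W Q : Matrix m n 𝕜) (η : 𝕜) :
    ‖(U - η • P) * (W - η • Q) - U * W‖ ≤
      ‖η‖ * (‖U‖ * ‖Q‖ + ‖P‖ * ‖W‖) + ‖η‖ ^ 2 * (‖P‖ * ‖Q‖) := by
  rw [sub_smul_mul_sub_smul_sub_mul]
  calc ‖η ^ 2 • (P * Q) - η • (U * Q + P * W)‖
      ≤ ‖η ^ 2 • (P * Q)‖ + ‖η • (U * Q + P * W)‖ := norm_sub_le _ _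
    _ ≤ ‖η‖ ^ 2 * (‖P‖ * ‖Q‖) + ‖η‖ * (‖U‖ * ‖Q‖ + ‖P‖ * ‖W‖) := by
        rw [norm_smul, norm_smul, norm_pow]
        gcongr
        · exact frobenius_norm_mul P Q
        · exact (norm_add_le _ _).trans
            (add_le_add (frobenius_norm_mul U Q) (frobenius_norm_mul P W))
    _ = _ := add_comm _ _

end Matrix

lemma frobNorm_eq_norm {m n : ℕ} (A : Matrix (Fin m) (Fin n) ℝ) : frobNorm A = ‖A‖ := by
  rw [frobenius_norm_def, frobNorm, frobSq, Real.sqrt_eq_rpow]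
  simp only [Real.rpow_two, Real.norm_eq_abs, sq_abs]

lemma frobSq_eq_norm_sq {m n : ℕ} (A : Matrix (Fin m) (Fin n) ℝ) : frobSq A = ‖A‖ ^ 2 := by
  rw [← frobNorm_eq_norm, frobNorm, Real.sq_sqrt]
  exact Finset.sum_nonneg fun i _ => Finset.sum_nonneg fun j _ => sq_nonneg _

lemma add_add_sq_le_three_mul (a b c : ℝ) : (a + b + c) ^ 2 ≤ 3 * (a ^ 2 + b ^ 2 + c ^ 2) := by
  nlinarith [sq_nonneg (a - b), sq_nonneg (a - c), sq_nonneg (b - c)]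

theorem one_step_product_change_bound_general {m n r : ℕ}
    (η G Γu Γv : ℝ)
    (U : Matrix (Fin m) (Fin r) ℝ) (hU : frobNorm U ≤ Γu)
    (V : Matrix (Fin n) (Fin r) ℝ) (hV : frobNorm V ≤ Γv)
    (P : Matrix (Fin m) (Fin r) ℝ) (hP : frobNorm P ≤ G * Γv)
    (Q : Matrix (Fin n) (Fin r) ℝ) (hQ : frobNorm Q ≤ G * Γu) :
    frobSq ((U - η • P) * (V - η • Q)ᵀ - U * Vᵀ) ≤
      3 * η ^ 2 * G ^ 2 * (Γu ^ 4 + Γv ^ 4 + η ^ 2 * G ^ 2 * Γu ^ 2 * Γv ^ 2) := by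
  rw [frobNorm_eq_norm] at hU hV hP hQ
  rw [← frobenius_norm_transpose V] at hV
  rw [← frobenius_norm_transpose Q] at hQ
  -- nonnegativity side conditions for `gcongr` below
  have hU₀ := (norm_nonneg U).trans hU
  have hP₀ := (norm_nonneg P).trans hP
  have hnorm : ‖(U - η • P) * (V - η • Q)ᵀ - U * Vᵀ‖ ≤
      ‖η‖ * (Γu * (G * Γu) + (G * Γv) * Γv) + ‖η‖ ^ 2 * ((G * Γv) * (G * Γu)) := by
    rw [transpose_sub, transpose_smul]
    refine (frobenius_norm_sub_smul_mul_sub_smul_sub_mul_le U P Vᵀ Qᵀ η).trans ?_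
    gcongr
  rw [frobSq_eq_norm_sq]
  calc _ ≤ (‖η‖ * (Γu * (G * Γu) + (G * Γv) * Γv) + ‖η‖ ^ 2 * ((G * Γv) * (G * Γu))) ^ 2 :=
        pow_le_pow_left₀ (norm_nonneg _) hnorm 2
    _ ≤ 3 * ((‖η‖ * (Γu * (G * Γu))) ^ 2 + (‖η‖ * ((G * Γv) * Γv)) ^ 2 +
          (‖η‖ ^ 2 * ((G * Γv) * (G * Γu))) ^ 2) := by
        rw [mul_add]
        exact add_add_sq_le_three_mul _ _ _
    _ = _ := by simp only [Real.norm_eq_abs, mul_pow, sq_abs, ← pow_mul]; ring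

/-- Deterministic matrix core of Lemma 5: one gradient step of stepsize η on both
low-rank factors changes the recovered product U·Vᵀ by at most
3η²G²(Γ_u⁴ + Γ_v⁴ + η²G²Γ_u²Γ_v²) in squared Frobenius norm. -/
theorem one_step_product_change_bound {m n r : ℕ}
    (hm : 0 < m) (hn : 0 < n) (hr : 0 < r)
    (η G Γu Γv : ℝ) (hη : 0 ≤ η) (hG : 0 ≤ G) (hΓu : 0 ≤ Γu) (hΓv : 0 ≤ Γv)
    (U : Matrix (Fin m) (Fin r) ℝ) (hU : frobNorm U ≤ Γu)
    (V : Matrix (Fin n) (Fin r) ℝ) (hV : frobNorm V ≤ Γv)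
    (P : Matrix (Fin m) (Fin r) ℝ) (hP : frobNorm P ≤ G * Γv)
    (Q : Matrix (Fin n) (Fin r) ℝ) (hQ : frobNorm Q ≤ G * Γu) :
    frobSq ((U - η • P) * (V - η • Q)ᵀ - U * Vᵀ) ≤
      3 * η ^ 2 * G ^ 2 * (Γu ^ 4 + Γv ^ 4 + η ^ 2 * G ^ 2 * Γu ^ 2 * Γv ^ 2) :=
  one_step_product_change_bound_general η G Γu Γv U hU V hV P hP Q hQ
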